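/- arXiv:0712.3598 — 2 statements merged into one kernel-verified Lean document; each statement's English description precedes it below -/
import Mathlib

section
/- Let z ∈ ℂ \ {0}, v ∈ ℂ, x ∈ ℝ, and set x_± = (x ± 6|z|)/3, v₊ = Im(v/√z), v₋ = Re(v/√z). Define g₂ = 4|z|² + |v|² + x²/3 and g₃ = (8/3)|z|²x − (1/3)|v|²x − (2/27)x³ − z v̄² − z̄ v². Then g₂ = x₊² + x₊x₋ + x₋² + (1/4)(x₊−x₋)(v₋² + v₊²) and g₃ = −(x₊+x₋)x₊x₋ − (1/4)(x₊−x₋)(x₊v₋² + x₋v₊²). -/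
/-!
Put `u = v / √z`, so that `v = u √z` and `v₋ + i v₊ = u`. Then `|v|² = |z| |u|²` and
`z̄ v² = |z|² u²`, so `Re (z v̄² + z̄ v²) = 2 |z|² (v₋² - v₊²)`. After these substitutions both
identities are polynomial identities in `x, |z|, v₋, v₊`.
-/

open Complex

namespace Complex

theorem norm_mul_sq_eq_norm_sq_mul (u w : ℂ) :
    ‖u * w‖ ^ 2 = ‖w ^ 2‖ * (u.re ^ 2 + u.im ^ 2) := by
  rw [norm_mul, mul_pow, norm_pow, Complex.sq_norm, normSq_apply]
  ring

theorem re_sq_mul_conj_sq_add_conj_sq_mul_sq (u w : ℂ) :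
    (w ^ 2 * starRingEnd ℂ (u * w) ^ 2 + starRingEnd ℂ (w ^ 2) * (u * w) ^ 2).re
      = 2 * ‖w ^ 2‖ ^ 2 * (u.re ^ 2 - u.im ^ 2) := by
  have hconj : starRingEnd ℂ (w ^ 2) * (u * w) ^ 2 = ((‖w ^ 2‖ ^ 2 : ℝ) : ℂ) * u ^ 2 := by
    rw [norm_pow, ofReal_pow, ofReal_pow, map_pow, ← conj_mul']
    ring
  have hsymm : w ^ 2 * starRingEnd ℂ (u * w) ^ 2
      = starRingEnd ℂ (starRingEnd ℂ (w ^ 2) * (u * w) ^ 2) := by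
    simp only [map_mul, map_pow, conj_conj]
  rw [hsymm, add_re, conj_re, hconj, re_ofReal_mul, sq u, mul_re]
  ring

end Complex

theorem O4_invariants_in_xpm_vpm
    (z v : ℂ) (x : ℝ) (hz : z ≠ 0)
    (w : ℂ) (hw : w ^ 2 = z)  -- a fixed square root of z
    (xp xm vp vm g₂ g₃ : ℝ)
    (hxp : xp = (x + 6 * ‖z‖) / 3)
    (hxm : xm = (x - 6 * ‖z‖) / 3)
    (hvp : vp = (v / w).im) (hvm : vm = (v / w).re)
    (hg₂ : g₂ = 4 * (‖z‖) ^ 2 + (‖v‖) ^ 2 + x ^ 2 / 3)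
    (hg₃ : g₃ = 8 / 3 * (‖z‖) ^ 2 * x - 1 / 3 * (‖v‖) ^ 2 * x
      - 2 / 27 * x ^ 3 - (z * ((starRingEnd ℂ) v) ^ 2 + (starRingEnd ℂ) z * v ^ 2).re) :
    g₂ = xp ^ 2 + xp * xm + xm ^ 2 + 1 / 4 * (xp - xm) * (vm ^ 2 + vp ^ 2) ∧
    g₃ = -(xp + xm) * xp * xm - 1 / 4 * (xp - xm) * (xp * vm ^ 2 + xm * vp ^ 2) := by
  subst hw
  have hw₀ : w ≠ 0 := by rintro rfl; simp at hz
  obtain ⟨u, rfl⟩ : ∃ u, v = u * w := ⟨v / w, (div_mul_cancel₀ v hw₀).symm⟩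
  rw [mul_div_cancel_right₀ u hw₀] at hvp hvm
  rw [norm_mul_sq_eq_norm_sq_mul] at hg₂ hg₃
  rw [re_sq_mul_conj_sq_add_conj_sq_mul_sq] at hg₃
  subst hxp hxm hvp hvm hg₂ hg₃
  constructor <;> ring
end

section
/- The complete elliptic integrals satisfy the differentiation formulas dK/d(k²) = (E(k) − k'²K(k))/(2k²k'²) and dE/d(k²) = (E(k) − K(k))/(2k²), for 0 < k < 1 with k'² = 1−k². -/
open Real intervalIntegral

/-- The complete elliptic integral of the first kind as a function of the parameter `m = k²`. -/
noncomputable def ellKm (m : ℝ) : ℝ :=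
  ∫ t in (0:ℝ)..1, 1 / Real.sqrt ((1 - t ^ 2) * (1 - m * t ^ 2))

/-- The complete elliptic integral of the second kind as a function of the parameter `m = k²`. -/
noncomputable def ellEm (m : ℝ) : ℝ :=
  ∫ t in (0:ℝ)..1, Real.sqrt ((1 - m * t ^ 2) / (1 - t ^ 2))

/-!
Both integrals belong to the family `J_p(m) = ∫₀¹ (1 - t²)^(-1/2) (1 - m t²)^p dt`:
`K = J_{-1/2}` and `E = J_{1/2}`. The weight `(1 - t²)^(-1/2)` is integrable and the other factor
is smooth in `m` uniformly in `t`, so one may differentiate under the integral sign; since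
`m t² = 1 - (1 - m t²)`, this gives `m J_p' = p (J_p - J_{p-1})`. For `p = 1/2` that is the formula
for `dE/dm`. For `p = -1/2` one also needs `(1 - m) J_{-3/2} = E`, obtained by integrating over
`[0, 1]` the derivative of `m t (1 - t²)^(1/2) (1 - m t²)^(-1/2)`, which vanishes at both ends and
equals `(1 - t²)^(-1/2) ((1 - m t²)^(1/2) - (1 - m) (1 - m t²)^(-3/2))`.
-/

open Set Metric MeasureTheory Filter Topology
open scoped Interval

theorem hasDerivAt_intervalIntegral_mul_of_continuousOn {w : ℝ → ℝ} {f f' : ℝ → ℝ → ℝ}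
    {a b x₀ ε : ℝ} (hw : IntervalIntegrable w volume a b) (hε : 0 < ε)
    (hf : ∀ x ∈ ball x₀ ε, ContinuousOn (f x) [[a, b]])
    (hf' : ContinuousOn (Function.uncurry f') (closedBall x₀ ε ×ˢ [[a, b]]))
    (hderiv : ∀ x ∈ ball x₀ ε, ∀ t ∈ [[a, b]], HasDerivAt (f · t) (f' x t) x) :
    HasDerivAt (fun x => ∫ t in a..b, w t * f x t) (∫ t in a..b, w t * f' x₀ t) x₀ := by
  obtain ⟨C, hC⟩ :=
    (isCompact_closedBall x₀ ε |>.prod isCompact_uIcc).exists_bound_of_continuousOn hf'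
  have hf'x₀ : ContinuousOn (f' x₀) [[a, b]] :=
    hf'.comp (f := fun t => (x₀, t)) (by fun_prop) fun _ ht => ⟨mem_closedBall_self hε.le, ht⟩
  refine (hasDerivAt_integral_of_dominated_loc_of_deriv_le (F := fun x t => w t * f x t)
    (F' := fun x t => w t * f' x t) (bound := fun t => ‖w t‖ * C)
    (ball_mem_nhds x₀ hε) ?_ (hw.mul_continuousOn (hf x₀ (mem_ball_self hε)))
    (hw.mul_continuousOn hf'x₀).aestronglyMeasurable_restrict_uIoc ?_ (hw.norm.mul_const C) ?_).2
  · filter_upwards [ball_mem_nhds x₀ hε] with x hx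
    exact (hw.mul_continuousOn (hf x hx)).aestronglyMeasurable_restrict_uIoc
  · refine Eventually.of_forall fun t ht x hx => ?_
    rw [norm_mul]
    exact mul_le_mul_of_nonneg_left
      (hC (x, t) ⟨ball_subset_closedBall hx, uIoc_subset_uIcc ht⟩) (norm_nonneg _)
  · exact Eventually.of_forall fun t ht x hx =>
      (hderiv x hx t (uIoc_subset_uIcc ht)).const_mul (w t)

theorem intervalIntegrable_one_sub_sq_rpow {p : ℝ} (hp : -1 < p) :
    IntervalIntegrable (fun t : ℝ => (1 - t ^ 2) ^ p) volume 0 1 := by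
  have h₁ : IntervalIntegrable (fun t : ℝ => (1 - t) ^ p) volume 0 1 := by
    simpa using ((intervalIntegrable_rpow' (a := 0) (b := 1) hp).comp_sub_left 1).symm
  have h₂ : ContinuousOn (fun t : ℝ => (1 + t) ^ p) [[0, 1]] := by
    refine ContinuousOn.rpow_const (by fun_prop) fun t ht => Or.inl ?_
    rw [uIcc_of_le zero_le_one] at ht
    linarith [ht.1]
  refine (h₁.mul_continuousOn h₂).congr fun t ht => ?_
  rw [uIoc_of_le zero_le_one] at ht
  rw [← mul_rpow (by linarith [ht.2]) (by linarith [ht.1])]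
  ring_nf

lemma one_sub_sq_nonneg {t : ℝ} (ht : t ∈ [[0, 1]]) : 0 ≤ 1 - t ^ 2 := by
  rw [uIcc_of_le zero_le_one] at ht
  nlinarith [ht.1, ht.2]

lemma one_sub_mul_sq_pos {m t : ℝ} (hm : m < 1) (ht : t ∈ [[0, 1]]) : 0 < 1 - m * t ^ 2 := by
  have ht2 : t ^ 2 ≤ 1 := by linarith [one_sub_sq_nonneg ht]
  rcases le_or_gt 0 m with h | h
  · nlinarith [mul_le_mul_of_nonneg_left ht2 h]
  · nlinarith [sq_nonneg t]

noncomputable def ellJ (p m : ℝ) : ℝ :=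
  ∫ t in (0:ℝ)..1, (1 - t ^ 2) ^ (-1/2 : ℝ) * (1 - m * t ^ 2) ^ p

lemma intervalIntegrable_ellJ_integrand (p : ℝ) {m : ℝ} (hm : m < 1) :
    IntervalIntegrable (fun t : ℝ => (1 - t ^ 2) ^ (-1/2 : ℝ) * (1 - m * t ^ 2) ^ p)
      volume 0 1 :=
  (intervalIntegrable_one_sub_sq_rpow (by norm_num)).mul_continuousOn <|
    ContinuousOn.rpow_const (by fun_prop) fun _ ht => Or.inl (one_sub_mul_sq_pos hm ht).ne'

theorem hasDerivAt_ellJ_integral (p : ℝ) {m : ℝ} (hm : m < 1) :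
    HasDerivAt (ellJ p)
      (∫ t in (0:ℝ)..1, (1 - t ^ 2) ^ (-1/2 : ℝ) * (-t ^ 2 * p * (1 - m * t ^ 2) ^ (p - 1))) m := by
  have hball : ∀ x ∈ closedBall m ((1 - m) / 2), x < 1 := fun x hx => by
    rw [mem_closedBall, Real.dist_eq, abs_le] at hx
    linarith [hx.2]
  refine hasDerivAt_intervalIntegral_mul_of_continuousOn
    (f := fun x t => (1 - x * t ^ 2) ^ p) (f' := fun x t => -t ^ 2 * p * (1 - x * t ^ 2) ^ (p - 1))
    (intervalIntegrable_one_sub_sq_rpow (p := -1/2) (by norm_num)) (by linarith)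
    (fun x hx => ContinuousOn.rpow_const (by fun_prop) fun t ht =>
      Or.inl (one_sub_mul_sq_pos (hball x (ball_subset_closedBall hx)) ht).ne')
    (ContinuousOn.mul (by fun_prop) (ContinuousOn.rpow_const (by fun_prop) fun (q : ℝ × ℝ) hq =>
      Or.inl (one_sub_mul_sq_pos (hball q.1 hq.1) hq.2).ne'))
    fun x hx t ht => ?_
  have hb := one_sub_mul_sq_pos (hball x (ball_subset_closedBall hx)) ht
  simpa using (((hasDerivAt_id x).mul_const (t ^ 2)).const_sub 1).rpow_const (p := p) (Or.inl hb.ne')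

theorem hasDerivAt_ellJ (p : ℝ) {m : ℝ} (hm0 : m ≠ 0) (hm : m < 1) :
    HasDerivAt (ellJ p) (p * (ellJ p m - ellJ (p - 1) m) / m) m := by
  refine (hasDerivAt_ellJ_integral p hm).congr_deriv ?_
  rw [eq_div_iff hm0, ellJ, ellJ, ← integral_sub (intervalIntegrable_ellJ_integrand p hm)
    (intervalIntegrable_ellJ_integrand (p - 1) hm), ← intervalIntegral.integral_const_mul,
    ← intervalIntegral.integral_mul_const]
  refine integral_congr fun t ht => ?_
  have hb := (one_sub_mul_sq_pos hm ht).ne'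
  rw [rpow_sub_one hb]
  have hmt : -t ^ 2 * m = (1 - m * t ^ 2) - 1 := by ring
  generalize (1 - t ^ 2) ^ (-1 / 2 : ℝ) = w
  generalize 1 - m * t ^ 2 = b at hb hmt ⊢
  field_simp
  linear_combination (w * p * b ^ p) * hmt

lemma hasDerivAt_legendre_primitive {m t : ℝ} (hm : m < 1) (ht : t ∈ Ioo (0:ℝ) 1) :
    HasDerivAt (fun t => m * t * (1 - t ^ 2) ^ (1/2 : ℝ) * (1 - m * t ^ 2) ^ (-1/2 : ℝ))
      ((1 - t ^ 2) ^ (-1/2 : ℝ) * (1 - m * t ^ 2) ^ (1/2 : ℝ) -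
        (1 - m) * ((1 - t ^ 2) ^ (-1/2 : ℝ) * (1 - m * t ^ 2) ^ (-3/2 : ℝ))) t := by
  have ha : 0 < 1 - t ^ 2 := by nlinarith [ht.1, ht.2]
  have hb : 0 < 1 - m * t ^ 2 :=
    one_sub_mul_sq_pos hm (Ioo_subset_Icc_self (by simpa [uIcc_of_le] using ht))
  have da := ((hasDerivAt_pow 2 t).const_sub 1).rpow_const (p := 1/2) (Or.inl ha.ne')
  have db := (((hasDerivAt_pow 2 t).const_mul m).const_sub 1).rpow_const (p := -1/2) (Or.inl hb.ne')
  refine ((((hasDerivAt_id t).const_mul m).mul da).mul db).congr_deriv ?_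
  have hA : (1 - t ^ 2) ^ (1/2 : ℝ) = (1 - t ^ 2) ^ (-1/2 : ℝ) * (1 - t ^ 2) := by
    rw [← rpow_add_one ha.ne']; norm_num
  have hB : (1 - m * t ^ 2) ^ (-1/2 : ℝ) = (1 - m * t ^ 2) ^ (-3/2 : ℝ) * (1 - m * t ^ 2) := by
    rw [← rpow_add_one hb.ne']; norm_num
  have hB' : (1 - m * t ^ 2) ^ (1/2 : ℝ) = (1 - m * t ^ 2) ^ (-1/2 : ℝ) * (1 - m * t ^ 2) := by
    rw [← rpow_add_one hb.ne']; norm_num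
  have e₁ : (1/2 : ℝ) - 1 = -1/2 := by norm_num
  have e₂ : (-1/2 : ℝ) - 1 = -3/2 := by norm_num
  simp only [id, Pi.mul_apply, Nat.cast_ofNat, e₁, e₂]
  rw [hA, hB', hB]
  ring

theorem one_sub_mul_ellJ_neg_three_halves {m : ℝ} (hm : m < 1) :
    (1 - m) * ellJ (-3/2) m = ellJ (1/2) m := by
  have hcont : ContinuousOn
      (fun t => m * t * (1 - t ^ 2) ^ (1/2 : ℝ) * (1 - m * t ^ 2) ^ (-1/2 : ℝ)) (Icc 0 1) := by
    refine ContinuousOn.mul (ContinuousOn.mul (by fun_prop)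
      (ContinuousOn.rpow_const (by fun_prop) fun _ _ => Or.inr (by norm_num)))
      (ContinuousOn.rpow_const (by fun_prop) fun t ht => Or.inl ?_)
    exact (one_sub_mul_sq_pos hm (by rwa [uIcc_of_le zero_le_one])).ne'
  have hFTC := integral_eq_sub_of_hasDeriv_right_of_le zero_le_one hcont
    (fun t ht => (hasDerivAt_legendre_primitive hm ht).hasDerivWithinAt)
    ((intervalIntegrable_ellJ_integrand (1/2) hm).sub
      ((intervalIntegrable_ellJ_integrand (-3/2) hm).const_mul (1 - m)))
  rw [integral_sub (intervalIntegrable_ellJ_integrand (1/2) hm)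
    ((intervalIntegrable_ellJ_integrand (-3/2) hm).const_mul (1 - m)),
    intervalIntegral.integral_const_mul] at hFTC
  simp only [one_pow, sub_self, ne_eq, one_div, inv_eq_zero, OfNat.ofNat_ne_zero,
    not_false_eq_true, zero_rpow, mul_zero, zero_mul, zero_pow, sub_zero] at hFTC
  rw [ellJ, ellJ]
  linarith

theorem ellKm_eq_ellJ {m : ℝ} (hm : m < 1) : ellKm m = ellJ (-1/2) m := by
  refine integral_congr fun t ht => ?_
  have ha := one_sub_sq_nonneg ht
  have hb := (one_sub_mul_sq_pos hm ht).le
  rw [sqrt_mul ha, sqrt_eq_rpow, sqrt_eq_rpow, one_div, mul_inv, ← rpow_neg ha, ← rpow_neg hb]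
  norm_num

theorem ellEm_eq_ellJ (m : ℝ) : ellEm m = ellJ (1/2) m := by
  refine integral_congr fun t ht => ?_
  have ha := one_sub_sq_nonneg ht
  rw [sqrt_div' _ ha, sqrt_eq_rpow, sqrt_eq_rpow, div_eq_inv_mul, ← rpow_neg ha]
  norm_num

/-- `dK/d(k²) = (E − k'²K)/(2k²k'²)` and `dE/d(k²) = (E − K)/(2k²)` with `k'² = 1 − k²`. -/
theorem ellK_ellE_deriv (k : ℝ) (hk0 : 0 < k) (hk1 : k < 1) :
    HasDerivAt ellKm
      ((ellEm (k ^ 2) - (1 - k ^ 2) * ellKm (k ^ 2)) / (2 * k ^ 2 * (1 - k ^ 2))) (k ^ 2) ∧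
    HasDerivAt ellEm ((ellEm (k ^ 2) - ellKm (k ^ 2)) / (2 * k ^ 2)) (k ^ 2) := by
  set m := k ^ 2
  have hm0 : 0 < m := by positivity
  have hm1 : m < 1 := by nlinarith
  have hK : ellKm =ᶠ[𝓝 m] ellJ (-1/2) :=
    eventually_of_mem (Iio_mem_nhds hm1) fun x hx => ellKm_eq_ellJ hx
  have hE : ellEm = ellJ (1/2) := funext ellEm_eq_ellJ
  rw [ellKm_eq_ellJ hm1, hE]
  constructor
  · refine ((hasDerivAt_ellJ (-1/2) hm0.ne' hm1).congr_of_eventuallyEq hK).congr_deriv ?_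
    have : 1 - m ≠ 0 := by linarith
    rw [← one_sub_mul_ellJ_neg_three_halves hm1, show (-1/2 : ℝ) - 1 = -3/2 by norm_num]
    field_simp
    ring
  · refine (hasDerivAt_ellJ (1/2) hm0.ne' hm1).congr_deriv ?_
    rw [show (1/2 : ℝ) - 1 = -1/2 by norm_num]
    ring
end
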